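/- arXiv:2205.06223 — 9 statements merged into one kernel-verified Lean document; each statement's English description precedes it below -/
import Mathlib

section
/- The maximum value of the Stern sequence a(n) over the interval 2^{i-1} ≤ n < 2^i is the Fibonacci number F_{i+1}, for all i ≥ 1. -/
def stern : ℕ → ℕ
  | 0 => 0
  | 1 => 1
  | n + 2 =>
    if (n + 2) % 2 = 0 then stern ((n + 2) / 2)
    else stern ((n + 2) / 2) + stern ((n + 2) / 2 + 1)
decreasing_by all_goals omega

lemma stern_even (n : ℕ) : stern (2 * n) = stern n := by
  match n with
  | 0 => rfl
  | n + 1 =>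
    rw [show 2 * (n + 1) = 2 * n + 2 by ring, stern]
    have h1 : (2 * n + 2) % 2 = 0 := by omega
    have h2 : (2 * n + 2) / 2 = n + 1 := by omega
    rw [h2]; simp [h1]

lemma stern_odd (n : ℕ) : stern (2 * n + 1) = stern n + stern (n + 1) := by
  match n with
  | 0 => simp [stern]
  | n + 1 =>
    rw [show 2 * (n + 1) + 1 = (2 * n + 1) + 2 by ring, stern]
    have h1 : ((2 * n + 1) + 2) % 2 = 1 := by omega
    have h2 : ((2 * n + 1) + 2) / 2 = n + 1 := by omega
    rw [h2]; simp [h1]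

lemma stern_pow2 (i : ℕ) : stern (2 ^ i) = 1 := by
  induction i with
  | zero => simp [stern]
  | succ i ih => rw [pow_succ, mul_comm, stern_even]; exact ih

lemma stern_le_fib : ∀ i : ℕ, ∀ n < 2 ^ i,
    stern n ≤ Nat.fib (i + 1) ∧ stern n + stern (n + 1) ≤ Nat.fib (i + 2) := by
  intro i
  induction i with
  | zero =>
    intro n hn
    interval_cases n
    simp [stern]
  | succ i ih =>
    intro n hn
    rcases Nat.even_or_odd n with ⟨m, hm⟩ | ⟨m, hm⟩
    · have hm' : m < 2 ^ i := by rw [pow_succ] at hn; omega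
      obtain ⟨h1, h2⟩ := ih m hm'
      subst hm
      rw [show m + m = 2 * m by ring, stern_even, show 2 * m + 1 = 2 * m + 1 from rfl,
        stern_odd]
      have e1 : Nat.fib (i + 1 + 2) = Nat.fib (i + 2) + Nat.fib (i + 1) := by
        rw [Nat.fib_add_two]; ring_nf
      have e2 : Nat.fib (i + 1 + 1) = Nat.fib (i + 2) := rfl
      constructor
      · calc stern m ≤ Nat.fib (i + 1) := h1
          _ ≤ Nat.fib (i + 2) := Nat.fib_le_fib_succ
      · omega
    · have hm' : m < 2 ^ i := by rw [pow_succ] at hn; omega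
      obtain ⟨h1, h2⟩ := ih m hm'
      subst hm
      have hsucc : stern (m + 1) ≤ Nat.fib (i + 1) := by
        rcases Nat.lt_or_ge (m + 1) (2 ^ i) with hl | hg
        · exact (ih (m + 1) hl).1
        · have he : m + 1 = 2 ^ i := by omega
          rw [he, stern_pow2]
          exact Nat.fib_pos.mpr (by omega)
      rw [stern_odd, show 2 * m + 1 + 1 = 2 * (m + 1) by ring, stern_even]
      have e1 : Nat.fib (i + 1 + 2) = Nat.fib (i + 2) + Nat.fib (i + 1) := by
        rw [Nat.fib_add_two]; ring_nf
      have e2 : Nat.fib (i + 1 + 1) = Nat.fib (i + 2) := rfl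
      constructor <;> omega

lemma stern_witness : ∀ i : ℕ, 1 ≤ i → ∃ n, n < 2 ^ i ∧ stern n = Nat.fib (i + 1) ∧
    ((2 ^ (i - 1) ≤ n ∧ stern (n + 1) = Nat.fib i) ∨
     (2 ^ (i - 1) + 1 ≤ n ∧ stern (n - 1) = Nat.fib i)) := by
  intro i hi
  induction i, hi using Nat.le_induction with
  | base =>
    refine ⟨1, by norm_num, by simp [stern], Or.inl ⟨by norm_num, ?_⟩⟩
    show stern 2 = Nat.fib 1
    rw [show (2:ℕ) = 2 * 1 by ring, stern_even]; simp [stern]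
  | succ i hi ih =>
    obtain ⟨n, hn, hs, hcase⟩ := ih
    have hfib : Nat.fib (i + 2) = Nat.fib (i + 1) + Nat.fib i := by
      rw [Nat.fib_add_two]; omega
    rcases hcase with ⟨hb, hr⟩ | ⟨hb, hl⟩
    · refine ⟨2 * n + 1, by rw [pow_succ]; omega, ?_, Or.inr ⟨?_, ?_⟩⟩
      · rw [stern_odd, hs, hr, hfib]
      · have : 2 ^ (i + 1 - 1) = 2 ^ (i - 1) * 2 := by
          rw [← pow_succ]; congr 1; omega
        omega
      · rw [show 2 * n + 1 - 1 = 2 * n by omega, stern_even, hs]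
    · have hn1 : 1 ≤ n := by
        have : 1 ≤ 2 ^ (i - 1) := Nat.one_le_two_pow
        omega
      refine ⟨2 * n - 1, by rw [pow_succ]; omega, ?_, Or.inl ⟨?_, ?_⟩⟩
      · rw [show 2 * n - 1 = 2 * (n - 1) + 1 by omega, stern_odd, show n - 1 + 1 = n by omega,
          hs, hl, hfib]; omega
      · have : 2 ^ (i + 1 - 1) = 2 ^ (i - 1) * 2 := by
          rw [← pow_succ]; congr 1; omega
        omega
      · rw [show 2 * n - 1 + 1 = 2 * n by omega, stern_even, hs]

theorem stern_max_interval (i : ℕ) (hi : 1 ≤ i) :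
    IsGreatest {x : ℕ | ∃ n : ℕ, 2 ^ (i - 1) ≤ n ∧ n < 2 ^ i ∧ x = stern n}
      (Nat.fib (i + 1)) := by
  constructor
  · obtain ⟨n, hn, hs, hcase⟩ := stern_witness i hi
    have hb : 2 ^ (i - 1) ≤ n := by rcases hcase with ⟨h, _⟩ | ⟨h, _⟩ <;> omega
    exact ⟨n, hb, hn, hs.symm⟩
  · rintro x ⟨n, _, hn, rfl⟩
    exact (stern_le_fib i n hn).1
end

section
/- The number of hyperbinary representations of n (representations n = Σ e_i 2^i with e_i ∈ {0,1,2}) equals a(n+1), where a is the Stern sequence. -/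
namespace Hyp

def sumVal (e : ℕ →₀ ℕ) : ℕ := e.sum fun i c => c * 2 ^ i

def S (n : ℕ) : Set (ℕ →₀ ℕ) := {e | (∀ i, e i ≤ 2) ∧ sumVal e = n}

noncomputable def tail (e : ℕ →₀ ℕ) : ℕ →₀ ℕ :=
  Finsupp.comapDomain Nat.succ e (Nat.succ_injective.injOn)

noncomputable def cons (c : ℕ) (e : ℕ →₀ ℕ) : ℕ →₀ ℕ :=
  Finsupp.single 0 c + e.embDomain ⟨Nat.succ, Nat.succ_injective⟩

@[simp] lemma tail_apply (e : ℕ →₀ ℕ) (i : ℕ) : tail e i = e (i + 1) := rfl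

@[simp] lemma cons_zero (c : ℕ) (e : ℕ →₀ ℕ) : cons c e 0 = c := by
  have h0 : (0:ℕ) ∉ Set.range (⟨Nat.succ, Nat.succ_injective⟩ : ℕ ↪ ℕ) := by
    simp [Function.Embedding.coeFn_mk]
  simp [cons, Finsupp.embDomain_notin_range _ _ _ h0]

@[simp] lemma cons_succ (c : ℕ) (e : ℕ →₀ ℕ) (i : ℕ) : cons c e (i + 1) = e i := by
  have h : e.embDomain ⟨Nat.succ, Nat.succ_injective⟩ (i+1) = e i :=
    Finsupp.embDomain_apply_self ⟨Nat.succ, Nat.succ_injective⟩ e i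
  simp [cons, h]

lemma tail_cons (c : ℕ) (e : ℕ →₀ ℕ) : tail (cons c e) = e := by
  ext i; simp

lemma cons_tail (e : ℕ →₀ ℕ) : cons (e 0) (tail e) = e := by
  ext i; cases i with
  | zero => simp
  | succ j => simp

lemma cons_injective (c : ℕ) : Function.Injective (cons c) := by
  intro e e' h
  have := congrArg tail h
  rwa [tail_cons, tail_cons] at this

lemma sumVal_cons (c : ℕ) (e : ℕ →₀ ℕ) : sumVal (cons c e) = c + 2 * sumVal e := by
  unfold sumVal cons
  rw [Finsupp.sum_add_index' (fun i => by simp) (fun i a b => by ring)]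
  rw [Finsupp.sum_single_index (by simp), Finsupp.sum_embDomain]
  simp only [Function.Embedding.coeFn_mk]
  rw [Finsupp.sum, Finsupp.sum, Finset.mul_sum]
  simp [pow_succ, Nat.succ_eq_add_one]
  ring_nf

lemma term_le (e : ℕ →₀ ℕ) (i : ℕ) : e i * 2 ^ i ≤ sumVal e := by
  by_cases h : e i = 0
  · simp [h]
  · exact Finset.single_le_sum (f := fun j => e j * 2 ^ j)
      (fun j _ => Nat.zero_le _) (Finsupp.mem_support_iff.2 h)

lemma apply_eq_zero_of_lt {n : ℕ} {e : ℕ →₀ ℕ} (he : e ∈ S n) {i : ℕ} (hi : n < 2 ^ i) :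
    e i = 0 := by
  have := term_le e i
  rw [he.2] at this
  by_contra h
  have : 2 ^ i ≤ n := le_trans (Nat.le_mul_of_pos_left _ (Nat.pos_of_ne_zero h)) this
  omega

lemma S_finite (n : ℕ) : (S n).Finite := by
  have hinj : Set.InjOn (fun (e : ℕ →₀ ℕ) => fun i : Fin (n+1) => e i) (S n) := by
    intro e he e' he' h
    ext i
    by_cases hi : i < n + 1
    · exact congrFun h ⟨i, hi⟩
    · have h1 : e i = 0 := apply_eq_zero_of_lt he (lt_of_lt_of_le (by omega) (Nat.lt_two_pow_self (n := i)).le)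
      have h2 : e' i = 0 := apply_eq_zero_of_lt he' (lt_of_lt_of_le (by omega) (Nat.lt_two_pow_self (n := i)).le)
      rw [h1, h2]
  have himg : ((fun (e : ℕ →₀ ℕ) => fun i : Fin (n+1) => e i) '' S n).Finite := by
    have hsub : ((fun (e : ℕ →₀ ℕ) => fun i : Fin (n+1) => e i) '' S n) ⊆
        Set.pi Set.univ (fun _ : Fin (n+1) => Set.Iic 2) := by
      rintro f ⟨e, he, rfl⟩ i _
      exact he.1 i
    exact Set.Finite.subset (Set.Finite.pi (fun _ => Set.finite_Iic 2)) hsub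
  exact Set.Finite.of_finite_image himg hinj

lemma cons_mem_S {c m n : ℕ} (hc : c ≤ 2) {e : ℕ →₀ ℕ} (he : e ∈ S m)
    (hn : n = c + 2 * m) : cons c e ∈ S n := by
  constructor
  · intro i
    cases i with
    | zero => simpa using hc
    | succ j => simpa using he.1 j
  · rw [sumVal_cons, he.2, hn]

lemma tail_mem_S {n : ℕ} {e : ℕ →₀ ℕ} (he : e ∈ S n) :
    tail e ∈ S ((n - e 0) / 2) ∧ n = e 0 + 2 * sumVal (tail e) := by
  have hsum : n = e 0 + 2 * sumVal (tail e) := by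
    have := sumVal_cons (e 0) (tail e)
    rw [cons_tail] at this
    rw [← he.2, this]
  refine ⟨⟨fun i => he.1 (i+1), ?_⟩, hsum⟩
  omega

lemma S_odd (m : ℕ) : S (2 * m + 1) = cons 1 '' S m := by
  ext e
  constructor
  · intro he
    obtain ⟨ht, hsum⟩ := tail_mem_S he
    have h0 : e 0 = 1 := by
      have := he.1 0
      omega
    refine ⟨tail e, ?_, by rw [← h0, cons_tail]⟩
    have : (2 * m + 1 - e 0) / 2 = m := by omega
    rwa [this] at ht
  · rintro ⟨f, hf, rfl⟩
    exact cons_mem_S (by norm_num) hf (by omega)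

lemma S_even (m : ℕ) : S (2 * m + 2) = cons 0 '' S (m + 1) ∪ cons 2 '' S m := by
  ext e
  constructor
  · intro he
    obtain ⟨ht, hsum⟩ := tail_mem_S he
    have h0 : e 0 = 0 ∨ e 0 = 2 := by
      have := he.1 0
      omega
    rcases h0 with h0 | h0
    · left
      refine ⟨tail e, ?_, by rw [← h0, cons_tail]⟩
      have : (2 * m + 2 - e 0) / 2 = m + 1 := by omega
      rwa [this] at ht
    · right
      refine ⟨tail e, ?_, by rw [← h0, cons_tail]⟩
      have : (2 * m + 2 - e 0) / 2 = m := by omega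
      rwa [this] at ht
  · rintro (⟨f, hf, rfl⟩ | ⟨f, hf, rfl⟩)
    · exact cons_mem_S (by norm_num) hf (by omega)
    · exact cons_mem_S (by norm_num) hf (by omega)

lemma S_zero : S 0 = {0} := by
  ext e
  constructor
  · intro he
    have : ∀ i, e i = 0 := fun i =>
      apply_eq_zero_of_lt he (by positivity : 0 < 2 ^ i)
    exact Finsupp.ext this
  · rintro rfl
    exact ⟨fun i => by simp, by simp [sumVal]⟩

lemma ncard_S_odd (m : ℕ) : (S (2 * m + 1)).ncard = (S m).ncard := by
  rw [S_odd, Set.ncard_image_of_injective _ (cons_injective 1)]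

lemma ncard_S_even (m : ℕ) :
    (S (2 * m + 2)).ncard = (S (m + 1)).ncard + (S m).ncard := by
  rw [S_even, Set.ncard_union_eq ?_ ((S_finite (m+1)).image _) ((S_finite m).image _),
    Set.ncard_image_of_injective _ (cons_injective 0),
    Set.ncard_image_of_injective _ (cons_injective 2)]
  rw [Set.disjoint_left]
  rintro e ⟨f, _, rfl⟩ ⟨g, _, hg⟩
  have := congrArg (fun h : ℕ →₀ ℕ => h 0) hg
  simp at this

lemma main : ∀ n, (S n).ncard = stern (n + 1) := by
  intro n
  induction n using Nat.strong_induction_on with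
  | _ n ih =>
    match n with
    | 0 =>
      rw [S_zero]
      simp [stern]
    | 1 =>
      have h := ncard_S_odd 0
      rw [show 2 * 0 + 1 = 1 from rfl] at h
      rw [h, S_zero]
      simp [stern]
    | (k + 2) =>
      rcases Nat.even_or_odd k with ⟨m, hm⟩ | ⟨m, hm⟩
      · -- k = 2m, n = 2m+2
        subst hm
        rw [show m + m + 2 = 2 * m + 2 by ring, ncard_S_even m]
        conv_rhs => rw [show 2 * m + 2 + 1 = (2 * m + 1) + 2 from rfl, stern]
        have hmod : ¬ (2 * m + 1 + 2) % 2 = 0 := by omega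
        rw [if_neg hmod]
        have h2 : (2 * m + 1 + 2) / 2 = m + 1 := by omega
        rw [h2, ih (m+1) (by omega), ih m (by omega)]
        omega
      · -- k = 2m+1, n = 2m+3
        subst hm
        rw [show 2 * m + 1 + 2 = 2 * (m + 1) + 1 by ring, ncard_S_odd (m+1)]
        conv_rhs => rw [show 2 * (m + 1) + 1 + 1 = (2 * m + 2) + 2 from rfl, stern]
        have hmod : (2 * m + 2 + 2) % 2 = 0 := by omega
        rw [if_pos hmod]
        have h2 : (2 * m + 2 + 2) / 2 = m + 2 := by omega
        rw [h2, ih (m+1) (by omega)]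

end Hyp

theorem hyperbinary_count (n : ℕ) :
    Set.ncard {e : ℕ →₀ ℕ | (∀ i, e i ≤ 2) ∧ (e.sum fun i c => c * 2 ^ i) = n}
      = stern (n + 1) := Hyp.main n
end

section
/- The sequence F_1·F_{2n}, F_3·F_{2n-2}, ..., F_{2n-1}·F_2 is strictly decreasing; that is, for 0 ≤ i < j with 2j+1 ≤ 2n-1, F_{2i+1}·F_{2n-2i} > F_{2j+1}·F_{2n-2j}. -/
open Nat

private lemma fibA (k d : ℕ) :
    (Nat.fib k * Nat.fib (d + k + 1) : ℤ) =
      Nat.fib (k + 1) * Nat.fib (d + k) + (-1) ^ (k + 1) * Nat.fib d := by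
  induction k with
  | zero => simp
  | succ k ih =>
    rw [show d + (k + 1) + 1 = (d + k) + 2 from by ring, Nat.fib_add_two,
      show (k + 1) + 1 = k + 2 from rfl, Nat.fib_add_two,
      show d + (k + 1) = (d + k) + 1 from by ring]
    push_cast
    push_cast at ih
    linear_combination (-1 : ℤ) * ih

private lemma step1 (a b : ℕ) (ha : Odd a) (hb : Even b) (hb1 : 1 ≤ b) :
    Nat.fib (a + 1) * Nat.fib b < Nat.fib a * Nat.fib (b + 1) := by
  have hne : a ≠ b := by
    rintro rfl; exact (Nat.not_even_iff_odd.mpr ha) hb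
  rcases lt_or_gt_of_ne hne with h | h
  · -- a < b : b = a + e + 1
    obtain ⟨e, rfl⟩ := Nat.exists_eq_add_of_lt h
    have he : 0 < Nat.fib (e + 1) := Nat.fib_pos.mpr (Nat.succ_pos e)
    have key := fibA a (e + 1)
    have hpow : ((-1 : ℤ)) ^ (a + 1) = 1 := by
      obtain ⟨c, rfl⟩ := ha
      rw [show 2 * c + 1 + 1 = 2 * (c + 1) by ring, pow_mul]
      norm_num
    rw [hpow, one_mul, show e + 1 + a = a + e + 1 from by ring] at key
    have hfe : (0 : ℤ) < Nat.fib (e + 1) := by exact_mod_cast he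
    have : (Nat.fib (a + 1) * Nat.fib (a + e + 1) : ℤ) <
        Nat.fib a * Nat.fib (a + e + 1 + 1) := by
      rw [key]; linarith
    exact_mod_cast this
  · -- b < a : a = b + e + 1
    obtain ⟨e, rfl⟩ := Nat.exists_eq_add_of_lt h
    have he : 0 < Nat.fib (e + 1) := Nat.fib_pos.mpr (Nat.succ_pos e)
    have key := fibA b (e + 1)
    have hpow : ((-1 : ℤ)) ^ (b + 1) = -1 := by
      obtain ⟨c, rfl⟩ := hb
      rw [show c + c + 1 = 2 * c + 1 by ring, pow_succ, pow_mul]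
      norm_num
    rw [hpow, show e + 1 + b = b + e + 1 from by ring] at key
    have hfe : (0 : ℤ) < Nat.fib (e + 1) := by exact_mod_cast he
    have : (Nat.fib (b + e + 1 + 1) * Nat.fib b : ℤ) <
        Nat.fib (b + e + 1) * Nat.fib (b + 1) := by nlinarith [key]
    exact_mod_cast this

private lemma step2 (a b : ℕ) (ha : Odd a) (hb : Even b) (hb1 : 1 ≤ b) :
    Nat.fib (a + 2) * Nat.fib b < Nat.fib a * Nat.fib (b + 2) := by
  have h1 := step1 a b ha hb hb1
  rw [Nat.fib_add_two, Nat.fib_add_two (n := b)]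
  have h0 : 0 < Nat.fib b := Nat.fib_pos.mpr hb1
  nlinarith [h1]

private lemma main_step (n k : ℕ) (hk : k + 1 ≤ n - 1) (hn : 1 ≤ n) :
    Nat.fib (2 * (k + 1) + 1) * Nat.fib (2 * n - 2 * (k + 1)) <
      Nat.fib (2 * k + 1) * Nat.fib (2 * n - 2 * k) := by
  obtain ⟨r, rfl⟩ : ∃ r, n = k + 2 + r := ⟨n - (k + 2), by omega⟩
  have e1 : 2 * (k + 2 + r) - 2 * (k + 1) = 2 * r + 2 := by omega
  have e2 : 2 * (k + 2 + r) - 2 * k = (2 * r + 2) + 2 := by omega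
  have e3 : 2 * (k + 1) + 1 = (2 * k + 1) + 2 := by ring
  rw [e1, e2, e3]
  exact step2 (2 * k + 1) (2 * r + 2) ⟨k, by ring⟩ ⟨r + 1, by ring⟩ (by omega)

theorem fib_odd_prod_strict_anti (n i j : ℕ) (hn : 1 ≤ n) (hij : i < j) (hj : j ≤ n - 1) :
    Nat.fib (2 * j + 1) * Nat.fib (2 * n - 2 * j) <
      Nat.fib (2 * i + 1) * Nat.fib (2 * n - 2 * i) := by
  induction j with
  | zero => omega
  | succ k ih =>
    rcases Nat.lt_or_ge i k with h | h
    · exact (main_step n k hj hn).trans (ih h (by omega))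
    · have : i = k := by omega
      subst this
      exact main_step n i hj hn
end

section
/- The sequence F_0·F_{2n}, F_2·F_{2n-2}, ..., F_n·F_n is strictly increasing (indexing over even splits): for 0 ≤ i < j ≤ n/2, F_{2i}·F_{2n-2i} < F_{2j}·F_{2n-2j}. -/
lemma fib_key (d : ℕ) : ∀ m : ℕ, (Nat.fib (m+2) : ℤ) * Nat.fib (m+d) -
    Nat.fib m * Nat.fib (m+d+2) = (-1)^m * Nat.fib d := by
  intro m
  induction m with
  | zero => simp
  | succ m ih =>
    have h1 : (Nat.fib (m+3) : ℤ) = Nat.fib (m+1) + Nat.fib (m+2) := by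
      exact_mod_cast congrArg (Nat.cast : ℕ → ℤ) (Nat.fib_add_two (n := m+1))
    have h2 : (Nat.fib (m+d+3) : ℤ) = Nat.fib (m+d+1) + Nat.fib (m+d+2) := by
      exact_mod_cast congrArg (Nat.cast : ℕ → ℤ) (Nat.fib_add_two (n := m+d+1))
    have h3 : (Nat.fib (m+d+2) : ℤ) = Nat.fib (m+d) + Nat.fib (m+d+1) := by
      exact_mod_cast congrArg (Nat.cast : ℕ → ℤ) (Nat.fib_add_two (n := m+d))
    have e1 : m+1+2 = m+3 := by ring
    have e2 : m+1+d = m+d+1 := by ring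
    have e3 : m+d+1+2 = m+d+3 := by ring
    have h4 : (Nat.fib (m+2) : ℤ) = Nat.fib m + Nat.fib (m+1) := by
      exact_mod_cast congrArg (Nat.cast : ℕ → ℤ) (Nat.fib_add_two (n := m))
    rw [e1, e2, e3, h1, h2, h3, h4]
    rw [h3, h4] at ih
    linear_combination -ih

lemma fib_step (n i : ℕ) (h : 2 * i + 2 ≤ n) :
    Nat.fib (2*i) * Nat.fib (2*n - 2*i) < Nat.fib (2*i+2) * Nat.fib (2*n - (2*i+2)) := by
  set d := 2*n - 4*i - 2 with hd
  have hd1 : 1 ≤ d := by omega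
  have ha : 2*n - 2*i = 2*i + d + 2 := by omega
  have hb : 2*n - (2*i+2) = 2*i + d := by omega
  rw [ha, hb]
  have key := fib_key d (2*i)
  have hpos : (0:ℤ) < Nat.fib d := by
    exact_mod_cast Nat.fib_pos.mpr hd1
  have hsign : ((-1:ℤ))^(2*i) = 1 := by
    rw [pow_mul]; norm_num
  rw [hsign, one_mul] at key
  have : (Nat.fib (2*i) : ℤ) * Nat.fib (2*i+d+2) < Nat.fib (2*i+2) * Nat.fib (2*i+d) := by
    linarith
  exact_mod_cast this

theorem fib_even_prod_strict_mono (n i j : ℕ) (hn : 2 ≤ n) (hij : i < j) (hj : 2 * j ≤ n) :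
    Nat.fib (2 * i) * Nat.fib (2 * n - 2 * i) <
      Nat.fib (2 * j) * Nat.fib (2 * n - 2 * j) := by
  induction j with
  | zero => omega
  | succ j ih =>
    rcases Nat.lt_succ_iff_lt_or_eq.mp hij with h | h
    · calc Nat.fib (2*i) * Nat.fib (2*n - 2*i)
          < Nat.fib (2*j) * Nat.fib (2*n - 2*j) := ih h (by omega)
        _ < Nat.fib (2*(j+1)) * Nat.fib (2*n - 2*(j+1)) := by
            have := fib_step n j (by omega)
            convert this using 3 <;> omega
    · subst h
      have := fib_step n i (by omega)
      convert this using 3 <;> omega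
end

section
/- For all i ≥ 0 and n ≥ 2i+1, F_{2i+1}·F_{2n-2i} = (F_{n+1}^2 − F_n^2) + (F_{n-2i}^2 − F_{n-2i-1}^2). -/
lemma cassini_int (n : ℕ) :
    ((Nat.fib (n+1) : ℤ))^2 - Nat.fib n * Nat.fib (n+2) = (-1)^n := by
  induction n with
  | zero => simp
  | succ k ih =>
    have h := Nat.fib_add_two (n := k)
    have h2 := Nat.fib_add_two (n := k+1)
    push_cast [h2, h] at *
    ring_nf
    ring_nf at ih
    linarith [ih]

theorem fib_odd_prod_identity (i n : ℕ) (hn : 2 * i + 1 ≤ n) :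
    Nat.fib (2 * i + 1) * Nat.fib (2 * n - 2 * i) =
      (Nat.fib (n + 1) ^ 2 - Nat.fib n ^ 2) +
        (Nat.fib (n - 2 * i) ^ 2 - Nat.fib (n - 2 * i - 1) ^ 2) := by
  obtain ⟨b, rfl⟩ : ∃ b, n = 2*i+1+b := ⟨n - (2*i+1), by omega⟩
  have e1 : 2*(2*i+1+b) - 2*i = 2*i+2*b+2 := by omega
  have e2 : 2*i+1+b - 2*i = b+1 := by omega
  have e3 : 2*i+1+b - 2*i - 1 = b := by omega
  have e4 : 2*i+1+b+1 = 2*i+b+2 := by omega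
  have e5 : 2*i+1+b = 2*i+b+1 := by omega
  rw [e1, e3, e2, e4, e5]
  have hm1 : Nat.fib (2*i+b+1) ^ 2 ≤ Nat.fib (2*i+b+2) ^ 2 :=
    Nat.pow_le_pow_left (Nat.fib_mono (by omega)) 2
  have hm2 : Nat.fib b ^ 2 ≤ Nat.fib (b+1) ^ 2 :=
    Nat.pow_le_pow_left (Nat.fib_mono (by omega)) 2
  zify [hm1, hm2]
  set P : ℤ := (Nat.fib (2*i+1) : ℤ) with hP
  set Q : ℤ := (Nat.fib (2*i+2) : ℤ) with hQ
  set u : ℤ := (Nat.fib b : ℤ) with hu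
  set v : ℤ := (Nat.fib (b+1) : ℤ) with hv
  have hQP : (Nat.fib (2*i) : ℤ) = Q - P := by
    rw [hQ, hP, Nat.fib_add_two]; push_cast; ring
  have hA : (Nat.fib (2*i+b+1) : ℤ) = u*(Q-P) + v*P := by
    have := Nat.fib_add b (2*i)
    rw [show b + 2*i + 1 = 2*i+b+1 by omega] at this
    rw [this]; push_cast [hQP]; ring
  have hB : (Nat.fib (2*i+b+2) : ℤ) = u*P + v*Q := by
    have := Nat.fib_add b (2*i+1)
    rw [show b + (2*i+1) + 1 = 2*i+b+2 by omega,
        show 2*i+1+1 = 2*i+2 by omega] at this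
    rw [this]; push_cast; ring
  have hC : (Nat.fib (2*i+2*b+2) : ℤ) =
      u * Nat.fib (2*i+b+1) + v * Nat.fib (2*i+b+2) := by
    have := Nat.fib_add b (2*i+b+1)
    rw [show b + (2*i+b+1) + 1 = 2*i+2*b+2 by omega,
        show 2*i+b+1+1 = 2*i+b+2 by omega] at this
    rw [this]; push_cast; ring
  have hD : P^2 + P*Q - Q^2 = 1 := by
    have h := cassini_int (2*i+1)
    rw [Nat.fib_add_two (n := 2*i+1), show 2*i+1+1 = 2*i+2 by ring] at h
    push_cast at h
    have hs : ((-1:ℤ))^(2*i+1) = -1 := by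
      rw [pow_succ, pow_mul]; norm_num
    rw [hs] at h
    linarith
  rw [hC, hA, hB]
  linear_combination (v^2 - u^2) * hD
end

section
/- For all n and all i with 0 ≤ 2i ≤ n, F_{2i}·F_{2n-2i} = F_n^2 − F_{n-2i}^2. -/
/-- Cassini-type: F_{m+1}² - F_{m+1}F_m - F_m² = (-1)^m over ℤ. -/
lemma fib_cassini_int (m : ℕ) :
    (Nat.fib (m + 1) : ℤ) ^ 2 - Nat.fib (m + 1) * Nat.fib m - (Nat.fib m) ^ 2
      = (-1) ^ m := by
  induction m with
  | zero => simp
  | succ k ih =>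
      have h : (Nat.fib (k + 2) : ℤ) = Nat.fib k + Nat.fib (k + 1) := by
        rw [Nat.fib_add_two]; push_cast; ring
      rw [show ((-1:ℤ)) ^ (k+1) = -(-1)^k by ring, ← ih,
        show k + 1 + 1 = k + 2 from rfl, h]; ring

/-- Addition formula cast to ℤ. -/
lemma fib_add_int (m k : ℕ) :
    (Nat.fib (m + k + 1) : ℤ)
      = Nat.fib m * Nat.fib k + Nat.fib (m + 1) * Nat.fib (k + 1) := by
  rw [Nat.fib_add]; push_cast; ring

/-- `F_{i+j} = F_{i+1}F_j + F_i F_{j+1} - F_i F_j` over ℤ. -/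
lemma fib_add_int' (i j : ℕ) :
    (Nat.fib (i + j) : ℤ)
      = Nat.fib (i + 1) * Nat.fib j + Nat.fib i * Nat.fib (j + 1)
        - Nat.fib i * Nat.fib j := by
  cases i with
  | zero => simp
  | succ k =>
      have h := fib_add_int k j
      have h2 : (Nat.fib (k + 2) : ℤ) = Nat.fib k + Nat.fib (k + 1) := by
        rw [Nat.fib_add_two]; push_cast; ring
      have : k + 1 + j = k + j + 1 := by ring
      rw [this, h, h2]; ring

/-- Vajda's identity over ℤ. -/
lemma fib_vajda (m i j : ℕ) :
    (Nat.fib (m + i) : ℤ) * Nat.fib (m + j)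
      = Nat.fib m * Nat.fib (m + i + j) + (-1) ^ m * Nat.fib i * Nat.fib j := by
  cases m with
  | zero => simp
  | succ k =>
      have hi : k + 1 + i = k + i + 1 := by ring
      have hj : k + 1 + j = k + j + 1 := by ring
      have hij : k + i + 1 + j = k + (i + j) + 1 := by ring
      rw [hi, hj, hij, fib_add_int k i, fib_add_int k j, fib_add_int k (i + j),
        fib_add_int' i j, fib_add_int i j]
      have hc := fib_cassini_int k
      have hsign : ((-1 : ℤ)) ^ (k + 1) = -(-1) ^ k := by ring
      rw [hsign]
      linear_combination (-(Nat.fib i : ℤ) * Nat.fib j) * hc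

theorem fib_even_prod_identity (n i : ℕ) (hi : 2 * i ≤ n) :
    Nat.fib (2 * i) * Nat.fib (2 * n - 2 * i) =
      Nat.fib n ^ 2 - Nat.fib (n - 2 * i) ^ 2 := by
  set b := n - 2 * i with hb
  have hn : n = 2 * i + b := by omega
  have h2 : 2 * n - 2 * i = 2 * i + b + b := by omega
  have key := fib_vajda (2 * i) b b
  rw [show 2 * i + b + b = 2 * n - 2 * i by omega] at key
  rw [show 2 * i + b = n by omega] at key
  have hsign : ((-1 : ℤ)) ^ (2 * i) = 1 := by
    rw [pow_mul]; norm_num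
  rw [hsign] at key
  have hle : Nat.fib b ^ 2 ≤ Nat.fib n ^ 2 :=
    Nat.pow_le_pow_left (Nat.fib_mono (by omega)) 2
  have : (Nat.fib (2 * i) * Nat.fib (2 * n - 2 * i) : ℤ)
      = (Nat.fib n : ℤ) ^ 2 - (Nat.fib b : ℤ) ^ 2 := by
    nlinarith [key]
  have := this
  zify [hle]
  linarith [this]
end

section
/- Define s(n) = a(n+1) where a is the Stern sequence. For binary strings x, y, letting G(x) = s([x]_2), prove the infix replacement principle: if matrices satisfy μ(t) ≥ μ(y) entrywise (with μ the matrix product of M1=[[1,1],[0,1]], M0=[[1,0],[1,1]] over the bits), then for all binary strings u, z, G(u t z) ≥ G(u y z). -/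
def M1 : Matrix (Fin 2) (Fin 2) ℕ := !![1, 1; 0, 1]

def M0 : Matrix (Fin 2) (Fin 2) ℕ := !![1, 0; 1, 1]

def mu : List Bool → Matrix (Fin 2) (Fin 2) ℕ
  | [] => 1
  | b :: r => (if b then M1 else M0) * mu r

def G (x : List Bool) : ℕ := mu x 0 0

lemma mu_append (a b : List Bool) : mu (a ++ b) = mu a * mu b := by
  induction a with
  | nil => simp [mu]
  | cons c r ih => simp [mu, ih, Matrix.mul_assoc]

lemma mul_entry_le {A B C D : Matrix (Fin 2) (Fin 2) ℕ}
    (h1 : ∀ i j, A i j ≤ C i j) (h2 : ∀ i j, B i j ≤ D i j) :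
    ∀ i j, (A * B) i j ≤ (C * D) i j := by
  intro i j
  simp only [Matrix.mul_apply]
  exact Finset.sum_le_sum fun k _ => Nat.mul_le_mul (h1 i k) (h2 k j)

theorem infix_replacement (t y : List Bool)
    (h : ∀ a b : Fin 2, mu y a b ≤ mu t a b) :
    ∀ u z : List Bool, G (u ++ y ++ z) ≤ G (u ++ t ++ z) := by
  intro u z
  unfold G
  rw [mu_append, mu_append, mu_append, mu_append]
  exact mul_entry_le (mul_entry_le (fun _ _ => le_refl _) h) (fun _ _ => le_refl _) 0 0
end

section
/- For i, j ≥ 1 and k ≥ 0 with matrix notation μ10 = M1·M0 and γ0 = [[0,0],[1,0]], the identity G((10)^i 0 (10)^j 0 (10)^k) = F_{2i+2j+2k+1} + F_{2i}F_{2j+2k+1} + F_{2i+2j}F_{2k+1} + F_{2i}F_{2j}F_{2k+1} holds, where G(x) = (1,0)·μ(x)·(1,0)^T. -/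
lemma key (n : ℕ) : (M1 * M0) ^ (n + 1) =
    !![Nat.fib (2*n+3), Nat.fib (2*n+2); Nat.fib (2*n+2), Nat.fib (2*n+1)] := by
  induction n with
  | zero => simp [M1, M0]; decide
  | succ m ih =>
    rw [pow_succ, ih]
    have r1 : Nat.fib (2*m+2) = Nat.fib (2*m) + Nat.fib (2*m+1) := Nat.fib_add_two
    have r2 : Nat.fib (2*m+3) = Nat.fib (2*m+1) + Nat.fib (2*m+2) := Nat.fib_add_two
    have r3 : Nat.fib (2*m+4) = Nat.fib (2*m+2) + Nat.fib (2*m+3) := Nat.fib_add_two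
    have r4 : Nat.fib (2*m+5) = Nat.fib (2*m+3) + Nat.fib (2*m+4) := Nat.fib_add_two
    ext x y
    fin_cases x <;> fin_cases y <;>
      simp [M1, M0, Matrix.mul_apply, Fin.sum_univ_two] <;>
      ring_nf <;> ring_nf at r1 r2 r3 r4 <;> omega

lemma col0 (k : ℕ) : ((M1 * M0) ^ k) 0 0 = Nat.fib (2*k+1) := by
  cases k with
  | zero => simp
  | succ m => rw [key]; simp [show 2*(m+1)+1 = 2*m+3 by ring]

lemma col1 (k : ℕ) : ((M1 * M0) ^ k) 1 0 = Nat.fib (2*k) := by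
  cases k with
  | zero => simp [Matrix.one_apply]
  | succ m => rw [key]; simp [show 2*(m+1) = 2*m+2 by ring]

theorem G_two_100s (i j k : ℕ) (hi : 1 ≤ i) (hj : 1 ≤ j) :
    ((M1 * M0) ^ i * M0 * ((M1 * M0) ^ j * M0) * (M1 * M0) ^ k) 0 0 =
      Nat.fib (2 * i + 2 * j + 2 * k + 1) +
        Nat.fib (2 * i) * Nat.fib (2 * j + 2 * k + 1) +
        Nat.fib (2 * i + 2 * j) * Nat.fib (2 * k + 1) +
        Nat.fib (2 * i) * Nat.fib (2 * j) * Nat.fib (2 * k + 1) := by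
  obtain ⟨a, rfl⟩ : ∃ a, i = a + 1 := ⟨i - 1, by omega⟩
  obtain ⟨b, rfl⟩ : ∃ b, j = b + 1 := ⟨j - 1, by omega⟩
  rw [key a, key b]
  simp only [Matrix.mul_apply, Fin.sum_univ_two, col0, col1]
  simp [M0]
  ring_nf
  have e1 : Nat.fib (3+b*2+k*2) = Nat.fib (2+b*2) * Nat.fib (k*2) + Nat.fib (3+b*2) * Nat.fib (1+k*2) := by
    rw [show 3+b*2+k*2 = (2+b*2)+(k*2)+1 by ring, Nat.fib_add,
      show 2+b*2+1 = 3+b*2 by ring, show k*2+1 = 1+k*2 by ring]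
  have e2 : Nat.fib (4+a*2+b*2) = Nat.fib (2+a*2) * Nat.fib (1+b*2) + Nat.fib (3+a*2) * Nat.fib (2+b*2) := by
    rw [show 4+a*2+b*2 = (2+a*2)+(1+b*2)+1 by ring, Nat.fib_add,
      show 2+a*2+1 = 3+a*2 by ring, show 1+b*2+1 = 2+b*2 by ring]
  have e4 : Nat.fib (1+b*2+k*2) = Nat.fib (b*2) * Nat.fib (k*2) + Nat.fib (1+b*2) * Nat.fib (1+k*2) := by
    rw [show 1+b*2+k*2 = (b*2)+(k*2)+1 by ring, Nat.fib_add,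
      show b*2+1 = 1+b*2 by ring, show k*2+1 = 1+k*2 by ring]
  have e5 : Nat.fib (2+b*2+k*2) = Nat.fib (1+b*2) * Nat.fib (k*2) + Nat.fib (2+b*2) * Nat.fib (1+k*2) := by
    rw [show 2+b*2+k*2 = (1+b*2)+(k*2)+1 by ring, Nat.fib_add,
      show 1+b*2+1 = 2+b*2 by ring, show k*2+1 = 1+k*2 by ring]
  have e3 : Nat.fib (5+a*2+b*2+k*2) =
      Nat.fib (3+a*2) * Nat.fib (1+b*2+k*2) + Nat.fib (4+a*2) * Nat.fib (2+b*2+k*2) := by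
    rw [show 5+a*2+b*2+k*2 = (3+a*2)+(1+b*2+k*2)+1 by ring, Nat.fib_add,
      show 3+a*2+1 = 4+a*2 by ring, show 1+b*2+k*2+1 = 2+b*2+k*2 by ring]
  have e6 : Nat.fib (4+a*2) = Nat.fib (2+a*2) + Nat.fib (3+a*2) := by
    rw [show 4+a*2 = (2+a*2)+2 by ring, Nat.fib_add_two, show 2+a*2+1 = 3+a*2 by ring]
  have r1 : Nat.fib (3+b*2) = Nat.fib (1+b*2) + Nat.fib (2+b*2) := by
    rw [show 3+b*2 = (1+b*2)+2 by ring, Nat.fib_add_two, show 1+b*2+1 = 2+b*2 by ring]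
  have r2 : Nat.fib (2+b*2) = Nat.fib (b*2) + Nat.fib (1+b*2) := by
    rw [show 2+b*2 = (b*2)+2 by ring, Nat.fib_add_two, show b*2+1 = 1+b*2 by ring]
  rw [e1, e2, e3, e4, e5, e6, r1, r2]
  ring
end

section
/- For n ≥ 1 and 1 ≤ i ≤ n, G((10)^i 0 (10)^{n-i}) = F_{2n+1} + F_{2i}·F_{2n-2i+1}, where G(x) = (1,0)·μ(x)·(1,0)^T with μ the matrix product over bits (M1 = [[1,1],[0,1]] for 1, M0 = [[1,0],[1,1]] for 0). In particular, the minimum of G over i ∈ [1,n] is F_{2n+1} + F_{2n-1}, attained at i = 1. -/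
lemma MM_pow (k : ℕ) : (M1*M0)^k =
    !![Nat.fib (2*k+1), Nat.fib (2*k); Nat.fib (2*k), Nat.fib (2*k+1) - Nat.fib (2*k)] := by
  induction k with
  | zero => simp [Matrix.one_fin_two]
  | succ k ih =>
    have hle : Nat.fib (2*k) ≤ Nat.fib (2*k+1) := Nat.fib_le_fib_succ
    have f1 : Nat.fib (2*(k+1)) = Nat.fib (2*k) + Nat.fib (2*k+1) := by
      rw [show 2*(k+1) = 2*k+2 from by ring, Nat.fib_add_two]
    have f2 : Nat.fib (2*(k+1)+1) = Nat.fib (2*k+1) + Nat.fib (2*(k+1)) := by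
      rw [show 2*(k+1)+1 = (2*k+1)+2 from by ring, Nat.fib_add_two,
        show 2*k+1+1 = 2*(k+1) from by ring]
    have hMM : M1*M0 = !![2,1;1,1] := by
      rw [M1, M0, Matrix.mul_fin_two]
    rw [pow_succ, ih, hMM, Matrix.mul_fin_two]
    ext a b
    fin_cases a <;> fin_cases b <;> simp [f1, f2] <;> omega

theorem G_single_100 (n i : ℕ) (hi : 1 ≤ i) (hin : i ≤ n) :
    ((M1 * M0) ^ i * M0 * (M1 * M0) ^ (n - i)) 0 0 =
      Nat.fib (2 * n + 1) + Nat.fib (2 * i) * Nat.fib (2 * n - 2 * i + 1) ∧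
    Nat.fib (2 * n + 1) + Nat.fib (2 * n - 1) ≤
      ((M1 * M0) ^ i * M0 * (M1 * M0) ^ (n - i)) 0 0 := by
  obtain ⟨j, rfl⟩ : ∃ j, i = j + 1 := ⟨i - 1, by omega⟩
  obtain ⟨m, rfl⟩ : ∃ m, n = j + 1 + m := ⟨n - (j+1), by omega⟩
  have hni : j + 1 + m - (j + 1) = m := by omega
  rw [MM_pow, MM_pow, hni, M0, Matrix.mul_fin_two, Matrix.mul_fin_two]
  have key : (!![(Nat.fib (2*(j+1)+1) * 1 + Nat.fib (2*(j+1)) * 1) * Nat.fib (2*m+1) +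
        (Nat.fib (2*(j+1)+1) * 0 + Nat.fib (2*(j+1)) * 1) * Nat.fib (2*m),
        (Nat.fib (2*(j+1)+1) * 1 + Nat.fib (2*(j+1)) * 1) * Nat.fib (2*m) +
        (Nat.fib (2*(j+1)+1) * 0 + Nat.fib (2*(j+1)) * 1) * (Nat.fib (2*m+1) - Nat.fib (2*m));
        (Nat.fib (2*(j+1)) * 1 + (Nat.fib (2*(j+1)+1) - Nat.fib (2*(j+1))) * 1) * Nat.fib (2*m+1) +
        (Nat.fib (2*(j+1)) * 0 + (Nat.fib (2*(j+1)+1) - Nat.fib (2*(j+1))) * 1) * Nat.fib (2*m),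
        (Nat.fib (2*(j+1)) * 1 + (Nat.fib (2*(j+1)+1) - Nat.fib (2*(j+1))) * 1) * Nat.fib (2*m) +
        (Nat.fib (2*(j+1)) * 0 + (Nat.fib (2*(j+1)+1) - Nat.fib (2*(j+1))) * 1) * (Nat.fib (2*m+1) - Nat.fib (2*m))] :
        Matrix (Fin 2) (Fin 2) ℕ) 0 0 =
      (Nat.fib (2*(j+1)+1) + Nat.fib (2*(j+1))) * Nat.fib (2*m+1)
        + Nat.fib (2*(j+1)) * Nat.fib (2*m) := by
    simp
  rw [key]
  have e2 : 2*(j+1+m) - 2*(j+1) + 1 = 2*m+1 := by omega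
  have hadd : Nat.fib (2*(j+1+m)+1)
      = Nat.fib (2*(j+1)) * Nat.fib (2*m) + Nat.fib (2*(j+1)+1) * Nat.fib (2*m+1) := by
    rw [show 2*(j+1+m)+1 = 2*(j+1) + (2*m) + 1 from by ring, Nat.fib_add]
  constructor
  · rw [hadd, e2]; ring
  · rw [hadd]
    have hadd2 : Nat.fib (2*(j+1+m)-1)
        = Nat.fib (2*j) * Nat.fib (2*m) + Nat.fib (2*j+1) * Nat.fib (2*m+1) := by
      rw [show 2*(j+1+m)-1 = (2*j) + (2*m) + 1 from by omega, Nat.fib_add]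
    rw [hadd2]
    have h1 : Nat.fib (2*(j+1)) = Nat.fib (2*j) + Nat.fib (2*j+1) := by
      rw [show 2*(j+1) = 2*j+2 from by ring, Nat.fib_add_two]
    have h2 : Nat.fib (2*m) ≤ Nat.fib (2*m+1) := Nat.fib_le_fib_succ
    nlinarith [h1, h2, Nat.fib (2*(j+1)+1)]
end
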